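/- arXiv:math/0305414 — 2 statements merged into one kernel-verified Lean document; each statement's English description precedes it below -/
import Mathlib

section
/- For any two distinct points x, y on a circle of radius R > 0, we have (1/12)·(1/R²) < 1/|x - y|² - 1/arc(x,y)² ≤ (1/4 - 1/π²)·(1/R²), where arc(x,y) is the length of the shorter arc between x and y. -/
/-!
Put `t = θ / 2`, where `θ` is the central angle. The chord is `2 R sin t` and the arc is `2 R t`,
so the quantity to bound is `(1 / (4 R²)) (1 / sin² t - 1 / t²)` with `0 < t ≤ π / 2`.
The lower bound `1 / sin² t - 1 / t² > 1 / 3` follows from `sin t ≤ t - t³/6 + t⁵/120`.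
For the upper bound, `1 / sin² t - 1 / t²` is increasing on `(0, π)`: its derivative has the sign
of `sin³ t - t³ cos t`, which is nonnegative by `sin t ≥ t - t³/6` and `cos t ≤ 1 - t²/2 + t⁴/24`.
Its value at `t = π / 2` is `1 - 4 / π²`.
-/

open InnerProductGeometry Real Set

namespace Real

theorem cos_le_one_sub_sq_add_pow_four (x : ℝ) : cos x ≤ 1 - x ^ 2 / 2 + x ^ 4 / 24 := by
  wlog hx : 0 ≤ x generalizing x
  · simpa [Even.neg_pow (by decide : Even 4)] using this (-x) (by linarith)
  let f (t : ℝ) : ℝ := 1 - t ^ 2 / 2 + t ^ 4 / 24 - cos t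
  have hmono : MonotoneOn f (Ici 0) := by
    refine monotoneOn_of_deriv_nonneg (convex_Ici 0) (by fun_prop) (by fun_prop) fun t ht ↦ ?_
    rw [interior_Ici] at ht
    simp (disch := fun_prop) [f]
    linarith [sin_ge_sub_cube (le_of_lt ht)]
  simpa [f] using hmono self_mem_Ici hx hx

theorem sin_le_sub_cube_add_pow_five {x : ℝ} (hx : 0 ≤ x) :
    sin x ≤ x - x ^ 3 / 6 + x ^ 5 / 120 := by
  let f (t : ℝ) : ℝ := t - t ^ 3 / 6 + t ^ 5 / 120 - sin t
  have hmono : MonotoneOn f (Ici 0) := by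
    refine monotoneOn_of_deriv_nonneg (convex_Ici 0) (by fun_prop) (by fun_prop) fun t _ ↦ ?_
    simp (disch := fun_prop) [f]
    linarith [cos_le_one_sub_sq_add_pow_four t]
  simpa [f] using hmono self_mem_Ici hx hx

theorem sin_sq_mul_three_add_sq_lt {x : ℝ} (hx : 0 < x) :
    sin x ^ 2 * (3 + x ^ 2) < 3 * x ^ 2 := by
  rcases lt_or_ge (3 / 2) (x ^ 2) with hlarge | hsmall
  · nlinarith [sin_sq_le_one x]
  have hsin : 0 ≤ sin x := by nlinarith [sin_ge_sub_cube hx.le]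
  -- `3 x² - (x - x³/6 + x⁵/120)² (3 + x²)` is `x⁶` times this polynomial
  have hfactor : 0 < 1 / 5 - 13 * x ^ 2 / 360 + 37 * x ^ 4 / 14400 - x ^ 6 / 14400 := by
    nlinarith [pow_pos hx 2, pow_pos hx 4]
  calc sin x ^ 2 * (3 + x ^ 2) ≤ (x - x ^ 3 / 6 + x ^ 5 / 120) ^ 2 * (3 + x ^ 2) := by
        gcongr
        exact sin_le_sub_cube_add_pow_five hx.le
    _ < 3 * x ^ 2 := by nlinarith [mul_pos (pow_pos hx 6) hfactor]

theorem pow_three_mul_cos_le_sin_pow_three {x : ℝ} (h0 : 0 ≤ x) (hπ : x ≤ π) :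
    x ^ 3 * cos x ≤ sin x ^ 3 := by
  have hsin := sin_nonneg_of_nonneg_of_le_pi h0 hπ
  rcases lt_or_ge (π / 2) x with hx | hx
  · nlinarith [cos_nonpos_of_pi_div_two_le_of_le hx.le (by linarith), pow_nonneg h0 3,
      pow_nonneg hsin 3]
  have hx6 : x ^ 2 ≤ 6 := by nlinarith [pi_lt_d2]
  calc x ^ 3 * cos x ≤ x ^ 3 * (1 - x ^ 2 / 2 + x ^ 4 / 24) := by
        gcongr
        exact cos_le_one_sub_sq_add_pow_four x
    -- the difference is `x⁷ (9 - x²) / 216`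
    _ ≤ (x - x ^ 3 / 6) ^ 3 := by
        nlinarith [mul_nonneg (pow_nonneg h0 7) (sub_nonneg.2 hx6), pow_nonneg h0 7]
    _ ≤ sin x ^ 3 := by
        gcongr
        · nlinarith
        · exact sin_ge_sub_cube h0

theorem monotoneOn_inv_sin_sq_sub_inv_sq :
    MonotoneOn (fun x ↦ (sin x ^ 2)⁻¹ - (x ^ 2)⁻¹) (Ioo 0 π) := by
  have hderiv : ∀ x ∈ Ioo 0 π, HasDerivAt (fun x ↦ (sin x ^ 2)⁻¹ - (x ^ 2)⁻¹)
      (2 * (sin x ^ 3 - x ^ 3 * cos x) / (x ^ 3 * sin x ^ 3)) x := by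
    rintro x ⟨hx, hxπ⟩
    have hsin := sin_pos_of_pos_of_lt_pi hx hxπ
    refine ((((hasDerivAt_sin x).fun_pow 2).fun_inv (pow_pos hsin 2).ne').fun_sub
      ((hasDerivAt_pow 2 x).fun_inv (pow_pos hx 2).ne')).congr_deriv ?_
    field_simp
    ring
  refine monotoneOn_of_deriv_nonneg (convex_Ioo 0 π)
    (fun x hx ↦ (hderiv x hx).continuousAt.continuousWithinAt) ?_ ?_ <;> rw [interior_Ioo]
  · exact fun x hx ↦ (hderiv x hx).differentiableAt.differentiableWithinAt
  · rintro x ⟨hx, hxπ⟩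
    have hsin := sin_pos_of_pos_of_lt_pi hx hxπ
    have := pow_three_mul_cos_le_sin_pow_three hx.le hxπ.le
    rw [(hderiv x ⟨hx, hxπ⟩).deriv]
    exact div_nonneg (by linarith) (by positivity)

theorem inv_three_lt_inv_sin_sq_sub_inv_sq {x : ℝ} (hx : 0 < x) (hxπ : x < π) :
    3⁻¹ < (sin x ^ 2)⁻¹ - (x ^ 2)⁻¹ := by
  have hsin := sin_pos_of_pos_of_lt_pi hx hxπ
  have := sin_sq_mul_three_add_sq_lt hx
  rw [← sub_pos]
  field_simp
  linarith

theorem inv_sin_sq_sub_inv_sq_le {x : ℝ} (hx : 0 < x) (hxπ : x ≤ π / 2) :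
    (sin x ^ 2)⁻¹ - (x ^ 2)⁻¹ ≤ 1 - 4 / π ^ 2 := by
  have hπ := pi_pos
  have := monotoneOn_inv_sin_sq_sub_inv_sq ⟨hx, by linarith⟩ ⟨by positivity, by linarith⟩ hxπ
  simp only [sin_pi_div_two] at this
  exact this.trans_eq (by ring)

end Real

namespace InnerProductGeometry

theorem dist_eq_two_mul_norm_mul_sin_half_angle {V : Type*} [NormedAddCommGroup V]
    [InnerProductSpace ℝ V] {x y : V} (h : ‖x‖ = ‖y‖) :
    dist x y = 2 * ‖x‖ * sin (angle x y / 2) := by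
  have hsin : 0 ≤ sin (angle x y / 2) :=
    sin_nonneg_of_nonneg_of_le_pi (by linarith [angle_nonneg x y])
      (by linarith [angle_le_pi x y, pi_pos])
  have hcos : cos (angle x y) = 1 - 2 * sin (angle x y / 2) ^ 2 := by
    rw [← cos_two_mul_eq_one_sub, mul_div_cancel₀ _ two_ne_zero]
  rw [dist_eq_norm]
  refine (sq_eq_sq₀ (norm_nonneg _) (by positivity)).1 ?_
  rw [sq, norm_sub_sq_eq_norm_sq_add_norm_sq_sub_two_mul_norm_mul_norm_mul_cos_angle, ← h, hcos]
  ring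

end InnerProductGeometry

/-- On a circle of radius `R` (centered at the origin), the arc length between `x`
and `y` is `R` times the angle between them as vectors. -/
theorem circle_chord_arc_bounds (R : ℝ) (hR : 0 < R) (x y : EuclideanSpace ℝ (Fin 2))
    (hx : ‖x‖ = R) (hy : ‖y‖ = R) (hxy : x ≠ y) :
    (1/12) * (1/R^2) < 1/dist x y^2 - 1/(R * angle x y)^2 ∧
    1/dist x y^2 - 1/(R * angle x y)^2 ≤ (1/4 - 1/Real.pi^2) * (1/R^2) := by
  obtain ⟨t, ht⟩ : ∃ t, angle x y = 2 * t := ⟨angle x y / 2, by ring⟩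
  have hdist : dist x y = 2 * R * sin t := by
    rw [← hx, dist_eq_two_mul_norm_mul_sin_half_angle (hx.trans hy.symm), ht,
      mul_div_cancel_left₀ _ two_ne_zero]
  have hsin : 0 < sin t := pos_of_mul_pos_right (hdist ▸ dist_pos.2 hxy) (by positivity)
  have htπ : t ≤ π / 2 := by linarith [angle_le_pi x y]
  have ht0 : 0 < t := lt_of_not_ge fun h ↦
    hsin.not_ge (sin_nonpos_of_nonpos_of_neg_pi_le h (by linarith [angle_nonneg x y, pi_pos]))
  have hsplit : 1 / dist x y ^ 2 - 1 / (R * angle x y) ^ 2 =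
      ((sin t ^ 2)⁻¹ - (t ^ 2)⁻¹) / 4 * (1 / R ^ 2) := by
    rw [hdist, ht]
    field_simp
    ring
  have lower := inv_three_lt_inv_sin_sq_sub_inv_sq ht0 (by linarith [pi_pos])
  have upper := inv_sin_sq_sub_inv_sq_le ht0 htπ
  have hR2 : 0 < 1 / R ^ 2 := by positivity
  rw [hsplit]
  exact ⟨mul_lt_mul_of_pos_right (by linarith) hR2,
    mul_le_mul_of_nonneg_right (by linarith [mul_one_div 4 (π ^ 2)]) hR2.le⟩
end

section
/- Let 0 < r < R be radii of two circles and let 0 < a < πr. If x, y are the endpoints of an arc of length a on the circle of radius r, and X, Y are the endpoints of an arc of length a on the circle of radius R, then 0 < 1/|x-y|² - 1/|X-Y|² < (1/4 - 1/π²)·(1/r²). -/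
/-!
Put `v = a / (2ρ)`. The chord cut off by an arc of length `a` on a circle of radius `ρ` has
length `c_ρ = 2ρ sin v = a · (sin v / v)`. Since `sin t / t` is strictly decreasing on `(0, π]`,
`c_r < c_R`, which gives positivity. For the upper bound, `c_R < a`, so the difference is below
`1/c_r² - 1/a² = (1/sin² v - 1/v²) / (4r²)`. The function `1/sin² t - 1/t²` is strictly increasing
on `(0, π)`, its derivative having the sign of `sin³ t - t³ cos t`, which is positive by the
Taylor bounds for `sin` and `cos`; as `v < π/2`, it stays below its value `1 - 4/π²` at `π/2`.
-/

open Real Set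

lemma cos_le_one_sub_sq_div_two_add_pow_four_div (x : ℝ) :
    cos x ≤ 1 - x ^ 2 / 2 + x ^ 4 / 24 := by
  wlog hx : 0 ≤ x generalizing x
  · have := this (-x) (by linarith)
    rwa [cos_neg, neg_sq, Even.neg_pow (by decide)] at this
  have hcos : cos x = 1 - 2 * sin (x / 2) ^ 2 := by
    have h := sin_sq_eq_half_sub (x / 2)
    rw [show 2 * (x / 2) = x by ring] at h
    linarith
  rcases le_or_gt (x ^ 2) 24 with hx24 | hx24
  · -- `sin y ≥ y - y³/6 ≥ 0` for `y = x / 2`, and `1 - 2 (y - y³/6)² = 1 - x²/2 + x⁴/24 - x⁶/1152`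
    have hcubic : 0 ≤ x / 2 - (x / 2) ^ 3 / 6 := by nlinarith
    have hsq := pow_le_pow_left₀ hcubic (sin_ge_sub_cube (by positivity : 0 ≤ x / 2)) 2
    rw [hcos]
    nlinarith [pow_nonneg hx 6]
  · nlinarith [cos_le_one x]

lemma lt_pi_div_two_of_cos_pos {x : ℝ} (hxπ : x < π) (hcos : 0 < cos x) : x < π / 2 := by
  by_contra! h
  linarith [cos_nonpos_of_pi_div_two_le_of_le h (by linarith)]

lemma pow_three_mul_cos_lt_sin_pow_three {x : ℝ} (hx0 : 0 < x) (hxπ : x < π) :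
    x ^ 3 * cos x < sin x ^ 3 := by
  have hsin : 0 < sin x := sin_pos_of_pos_of_lt_pi hx0 hxπ
  rcases le_or_gt (cos x) 0 with hcos | hcos
  · have : x ^ 3 * cos x ≤ 0 := mul_nonpos_of_nonneg_of_nonpos (by positivity) hcos
    linarith [pow_pos hsin 3]
  have hx2 : x < 2 := (lt_pi_div_two_of_cos_pos hxπ hcos).trans (by linarith [pi_lt_four])
  have hx9 : 0 < 9 - x ^ 2 := by nlinarith
  calc x ^ 3 * cos x ≤ x ^ 3 * (1 - x ^ 2 / 2 + x ^ 4 / 24) := by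
        gcongr; exact cos_le_one_sub_sq_div_two_add_pow_four_div x
    _ < (x - x ^ 3 / 6) ^ 3 := by
        have : 0 < x ^ 7 * (9 - x ^ 2) := by positivity
        linear_combination this / 216
    _ ≤ sin x ^ 3 := (Odd.strictMono_pow (by decide)).monotone (sin_ge_sub_cube hx0.le)

lemma mul_cos_lt_sin {x : ℝ} (hx0 : 0 < x) (hxπ : x < π) : x * cos x < sin x := by
  rcases le_or_gt (cos x) 0 with hcos | hcos
  · nlinarith [sin_pos_of_pos_of_lt_pi hx0 hxπ]
  have := lt_tan hx0 (lt_pi_div_two_of_cos_pos hxπ hcos)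
  rwa [tan_eq_sin_div_cos, lt_div_iff₀ hcos] at this

lemma strictAntiOn_sin_div_self : StrictAntiOn (fun x => sin x / x) (Ioc 0 π) := by
  have hd : ∀ x ∈ Ioc 0 π, HasDerivAt (fun x => sin x / x) ((cos x * x - sin x) / x ^ 2) x :=
    fun x hx => by simpa using (hasDerivAt_sin x).fun_div (hasDerivAt_id' x) hx.1.ne'
  apply strictAntiOn_of_deriv_neg (convex_Ioc 0 π)
    (fun x hx => (hd x hx).continuousAt.continuousWithinAt)
  intro x hx
  rw [interior_Ioc] at hx
  rw [(hd x (Ioo_subset_Ioc_self hx)).deriv]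
  have := mul_cos_lt_sin hx.1 hx.2
  exact div_neg_of_neg_of_pos (by linarith) (by have := hx.1; positivity)

lemma strictMonoOn_one_div_sin_sq_sub_one_div_sq :
    StrictMonoOn (fun x => 1 / sin x ^ 2 - 1 / x ^ 2) (Ioo 0 π) := by
  have hd : ∀ x ∈ Ioo 0 π, HasDerivAt (fun x => 1 / sin x ^ 2 - 1 / x ^ 2)
      (2 / x ^ 3 - 2 * cos x / sin x ^ 3) x := by
    intro x hx
    have hsin := (sin_pos_of_pos_of_lt_pi hx.1 hx.2).ne'
    have := ((hasDerivAt_const x (1 : ℝ)).fun_div ((hasDerivAt_sin x).fun_pow 2)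
      (pow_ne_zero 2 hsin)).sub ((hasDerivAt_const x (1 : ℝ)).fun_div
      ((hasDerivAt_id' x).fun_pow 2) (pow_ne_zero 2 hx.1.ne'))
    refine this.congr_deriv ?_
    have := hx.1.ne'
    field_simp
    ring
  apply strictMonoOn_of_deriv_pos (convex_Ioo 0 π)
    (fun x hx => (hd x hx).continuousAt.continuousWithinAt)
  intro x hx
  rw [interior_Ioo] at hx
  rw [(hd x hx).deriv, sub_pos, div_lt_div_iff₀ (pow_pos (sin_pos_of_pos_of_lt_pi hx.1 hx.2) 3)
    (pow_pos hx.1 3)]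
  linarith [pow_three_mul_cos_lt_sin_pow_three hx.1 hx.2]

lemma one_div_sin_sq_sub_one_div_sq_lt {x : ℝ} (hx0 : 0 < x) (hx : x < π / 2) :
    1 / sin x ^ 2 - 1 / x ^ 2 < 1 - 4 / π ^ 2 := by
  have h := strictMonoOn_one_div_sin_sq_sub_one_div_sq ⟨hx0, by linarith [pi_pos]⟩
    ⟨pi_div_two_pos, by linarith [pi_pos]⟩ hx
  calc _ < _ := h
    _ = 1 - 4 / π ^ 2 := by
      beta_reduce
      rw [sin_pi_div_two]
      field_simp
      ring

/-- `|x - y|` for the endpoints `x, y` of an arc of length `a` on a circle of radius `ρ`. -/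
noncomputable def chordLength (ρ a : ℝ) : ℝ := 2 * ρ * sin (a / (2 * ρ))

lemma chordLength_sq (ρ a : ℝ) : chordLength ρ a ^ 2 = ρ ^ 2 * (2 - 2 * cos (a / ρ)) := by
  have h := sin_sq_eq_half_sub (a / (2 * ρ))
  rw [show 2 * (a / (2 * ρ)) = a / ρ by ring] at h
  rw [chordLength, mul_pow, h]
  ring

lemma chordLength_eq_mul_sin_div {ρ a : ℝ} (hρ : ρ ≠ 0) (ha : a ≠ 0) :
    chordLength ρ a = a * (sin (a / (2 * ρ)) / (a / (2 * ρ))) := by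
  rw [chordLength]
  field_simp

lemma chordLength_pos {ρ a : ℝ} (hρ : 0 < ρ) (ha : 0 < a) (haρ : a < 2 * π * ρ) :
    0 < chordLength ρ a := by
  have : a / (2 * ρ) < π := by rw [div_lt_iff₀ (by positivity)]; linarith
  exact mul_pos (by positivity) (sin_pos_of_pos_of_lt_pi (by positivity) this)

lemma chordLength_lt {ρ a : ℝ} (hρ : 0 < ρ) (ha : 0 < a) : chordLength ρ a < a := by
  have := sin_lt (show 0 < a / (2 * ρ) by positivity)
  calc chordLength ρ a < 2 * ρ * (a / (2 * ρ)) := by rw [chordLength]; gcongr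
    _ = a := by field_simp

lemma chordLength_lt_chordLength {r R a : ℝ} (hr : 0 < r) (hrR : r < R) (ha : 0 < a)
    (har : a ≤ 2 * π * r) : chordLength r a < chordLength R a := by
  have hR : 0 < R := hr.trans hrR
  have hsmaller : a / (2 * R) < a / (2 * r) := by gcongr
  have hr_le : a / (2 * r) ≤ π := by rw [div_le_iff₀ (by positivity)]; linarith
  rw [chordLength_eq_mul_sin_div hr.ne' ha.ne', chordLength_eq_mul_sin_div hR.ne' ha.ne']
  exact mul_lt_mul_of_pos_left (strictAntiOn_sin_div_self
    ⟨by positivity, hsmaller.le.trans hr_le⟩ ⟨by positivity, hr_le⟩ hsmaller) ha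

lemma one_div_chordLength_sq_sub_one_div_sq_lt {ρ a : ℝ} (hρ : 0 < ρ) (ha : 0 < a)
    (haρ : a < π * ρ) :
    1 / chordLength ρ a ^ 2 - 1 / a ^ 2 < (1 / 4 - 1 / π ^ 2) * (1 / ρ ^ 2) := by
  have hv : a / (2 * ρ) < π / 2 := by
    rw [div_lt_div_iff₀ (by positivity) two_pos]; linarith
  have h := one_div_sin_sq_sub_one_div_sq_lt (by positivity) hv
  have hρ' := hρ.ne'
  calc 1 / chordLength ρ a ^ 2 - 1 / a ^ 2
      = 1 / (4 * ρ ^ 2) * (1 / sin (a / (2 * ρ)) ^ 2 - 1 / (a / (2 * ρ)) ^ 2) := by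
        rw [chordLength]; field_simp; ring
    _ < 1 / (4 * ρ ^ 2) * (1 - 4 / π ^ 2) := by gcongr
    _ = (1 / 4 - 1 / π ^ 2) * (1 / ρ ^ 2) := by ring

/-- Chords subtending arcs of the same length `a` on circles of radii `r < R`:
`|x-y|² = r²(2-2cos(a/r))`, `|X-Y|² = R²(2-2cos(a/R))`. -/
theorem chords_on_different_circles (r R a : ℝ) (hr : 0 < r) (hrR : r < R)
    (ha0 : 0 < a) (ha : a < Real.pi * r) :
    0 < 1/(r^2*(2 - 2*Real.cos (a/r))) - 1/(R^2*(2 - 2*Real.cos (a/R))) ∧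
    1/(r^2*(2 - 2*Real.cos (a/r))) - 1/(R^2*(2 - 2*Real.cos (a/R)))
      < (1/4 - 1/Real.pi^2) * (1/r^2) := by
  have hR : 0 < R := hr.trans hrR
  have har : a < 2 * π * r := by linarith [mul_pos pi_pos hr]
  have hr_chord := chordLength_pos hr ha0 har
  have hR_chord := chordLength_pos hR ha0 (by nlinarith [pi_pos])
  have hlt := chordLength_lt_chordLength hr hrR ha0 har.le
  rw [← chordLength_sq, ← chordLength_sq]
  constructor
  · rw [sub_pos]
    gcongr
  · calc _ < 1 / chordLength r a ^ 2 - 1 / a ^ 2 := by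
          gcongr
          exact chordLength_lt hR ha0
      _ < _ := one_div_chordLength_sq_sub_one_div_sq_lt hr ha0 ha
end
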